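/- For a real number q with q ≠ 0, 1/2, 1, one has 12·arg(-1 + (1-2q)√3·i) ≡ 0 mod 2π but 6·arg(-1 + (1-2q)√3·i) ≢ 0 mod 2π if and only if q = 1/3 or q = 2/3. -/

import Mathlib

open Complex Real

/-- The complex number whose argument (times 6) gives the rotation angle of `T_q`. -/
noncomputable def zq (q : ℝ) : ℂ := -1 + ((1 - 2 * q : ℝ) : ℂ) * (Real.sqrt 3 : ℂ) * Complex.I

lemma pow6 (v : ℝ) : (-1 + (v:ℂ)*Complex.I)^6 =
    (((3*v^2-1)^2 - v^2*(3-v^2)^2 : ℝ) : ℂ) + ((2*v*(3*v^2-1)*(3-v^2) : ℝ):ℂ)*Complex.I := by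
  push_cast
  linear_combination ((v:ℂ)^6*Complex.I^4 - 6*(v:ℂ)^5*Complex.I^3 + (15*(v:ℂ)^4 - (v:ℂ)^6)*Complex.I^2
    + (6*(v:ℂ)^5 - 20*(v:ℂ)^3)*Complex.I + ((v:ℂ)^6 - 15*(v:ℂ)^4 + 15*(v:ℂ)^2)) * Complex.I_sq

theorem stmt2 (q : ℝ) (h0 : q ≠ 0) (h12 : q ≠ 1 / 2) (h1 : q ≠ 1) :
    ((zq q) ^ 12 = (‖zq q‖ ^ 12 : ℝ) ∧
      (zq q) ^ 6 ≠ (‖zq q‖ ^ 6 : ℝ)) ↔ q = 1 / 3 ∨ q = 2 / 3 := by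
  set s : ℝ := Real.sqrt 3 with hs
  have hs3 : s^2 = 3 := Real.sq_sqrt (by norm_num)
  have hspos : 0 < s := Real.sqrt_pos.mpr (by norm_num)
  set v : ℝ := (1 - 2*q) * s with hv
  have hzq : zq q = -1 + (v:ℂ)*Complex.I := by
    rw [zq, hv, hs]; push_cast; ring
  have hv2 : v^2 = 3*(1-2*q)^2 := by rw [hv]; rw [mul_pow, hs3]; ring
  have habs2 : ‖zq q‖^2 = 1 + v^2 := by
    rw [Complex.sq_norm, hzq, Complex.normSq_apply]
    simp
    ring
  have hz6 : (zq q)^6 = (((3*v^2-1)^2 - v^2*(3-v^2)^2 : ℝ) : ℂ) + ((2*v*(3*v^2-1)*(3-v^2) : ℝ):ℂ)*Complex.I := by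
    rw [hzq, pow6]
  have habs6 : ‖zq q‖^6 = (1+v^2)^3 := by
    calc ‖zq q‖^6 = (‖zq q‖^2)^3 := by ring
    _ = (1+v^2)^3 := by rw [habs2]
  constructor
  · rintro ⟨heq, hne⟩
    -- z^6 = -(abs^6)
    have h2 : ((zq q)^6 - (‖zq q‖^6 : ℝ)) * ((zq q)^6 + (‖zq q‖^6 : ℝ)) = 0 := by
      have : (zq q)^12 - ((‖zq q‖^12 : ℝ) : ℂ) = 0 := by rw [heq]; ring
      calc _ = (zq q)^12 - ((‖zq q‖^12 : ℝ) : ℂ) := by push_cast; ring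
      _ = 0 := this
    have hneg : (zq q)^6 = -((‖zq q‖^6 : ℝ) : ℂ) := by
      rcases mul_eq_zero.mp h2 with h | h
      · exact absurd (by linear_combination h) hne
      · linear_combination h
    have him : 2*v*(3*v^2-1)*(3-v^2) = 0 := by
      have := congrArg Complex.im hneg
      rw [hz6] at this
      simp only [Complex.add_im, Complex.mul_im, Complex.ofReal_im, Complex.ofReal_re,
        Complex.I_im, Complex.I_re, Complex.neg_im, mul_zero, mul_one, zero_add, add_zero,
        zero_mul, neg_zero] at this
      linarith
    have hvne : v ≠ 0 := by
      intro h
      rcases mul_eq_zero.mp (by rw [hv] at h; exact h) with h' | h'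
      · apply h12; linarith
      · exact absurd h' (ne_of_gt hspos)
    have h3v : 3 - v^2 ≠ 0 := by
      rw [hv2]
      intro h
      have h' : (-2*q)*(2-2*q) = 0 := by nlinarith
      rcases mul_eq_zero.mp h' with h'' | h''
      · exact h0 (by linarith)
      · exact h1 (by linarith)
    have h9 : 3*v^2 - 1 = 0 := by
      rcases mul_eq_zero.mp him with h | h
      · rcases mul_eq_zero.mp h with h' | h'
        · exact absurd (by linarith [mul_eq_zero.mp h']) hvne
        · exact h'
      · exact absurd h h3v
    rw [hv2] at h9
    have : (1-2*q)^2 = 1/9 := by linarith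
    have h19 : (3*(1-2*q) - 1) * (3*(1-2*q) + 1) = 0 := by nlinarith
    rcases mul_eq_zero.mp h19 with h | h
    · left; linarith
    · right; linarith
  · intro hq
    have hv13 : v^2 = 1/3 := by
      rw [hv2]; rcases hq with h | h <;> rw [h] <;> norm_num
    have h36 : (zq q)^6 = ((-(64/27) : ℝ) : ℂ) := by
      rw [hz6, hv13]
      have : 3*(1/3 : ℝ) - 1 = 0 := by norm_num
      norm_num
    have habs6' : (‖zq q‖^6 : ℝ) = (64/27 : ℝ) := by
      rw [habs6, hv13]; norm_num
    constructor
    · have : (zq q)^12 = ((zq q)^6)^2 := by ring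
      rw [this, h36]
      have : (‖zq q‖^12 : ℝ) = (‖zq q‖^6)^2 := by ring
      rw [this, habs6']
      norm_num
    · rw [h36, habs6']
      intro h
      have := Complex.ofReal_inj.mp h
      norm_num at this
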